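/- Soundness with respect to relations for the signature {∘, 1, D}: for any {∘, 1, D}-terms s and t over variables Σ, if ⟨s⟩ = ⟨t⟩ then for every set X and every assignment f of binary relations on X to the variables, the relational interpretations of s and t under f coincide. -/

import Mathlib

inductive PreTree (α : Type) : Type
  | node : Bool → List (α × PreTree α) → PreTree α

namespace PreTree

variable {α : Type}

def mark : PreTree α → Bool
  | node b _ => b

def children : PreTree α → List (α × PreTree α)
  | node _ cs => cs

def le : PreTree α → PreTree α → Prop
  | node b₁ c₁, node b₂ c₂ =>
      (b₂ = true → b₁ = true) ∧
      ∀ q, q ∈ c₂ → ∃ p, p ∈ c₁ ∧ p.1 = q.1 ∧ le p.2 q.2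
termination_by _ t₂ => sizeOf t₂
decreasing_by
  have h := List.sizeOf_lt_of_mem ‹q ∈ c₂›
  obtain ⟨qa, qt⟩ := q
  simp at h ⊢
  omega

-- The reduced form of a tree: reduce all child subtrees, then for each
-- label keep only the `≤`-minimal attached subtrees.
open scoped Classical in
noncomputable def reduce : PreTree α → PreTree α
  | node b cs =>
      let cs' : List (α × PreTree α) := cs.attach.map fun p => (p.1.1, reduce p.1.2)
      node b (cs'.filter fun q =>
        decide (∀ q' ∈ cs', q'.1 = q.1 → le q'.2 q.2 → le q.2 q'.2))
termination_by t => sizeOf t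
decreasing_by
  have h := List.sizeOf_lt_of_mem p.2
  obtain ⟨⟨pa, pt⟩, hp⟩ := p
  simp at h ⊢
  omega

/-- A tree is reduced if it equals its reduced form. -/
def Reduced (T : PreTree α) : Prop := reduce T = T

/-- The number of marked (point) vertices of a tree. -/
def markCount : PreTree α → ℕ
  | node b cs => (cond b 1 0) + (cs.attach.map fun p => markCount p.1.2).sum
termination_by t => sizeOf t
decreasing_by
  have h := List.sizeOf_lt_of_mem p.2
  obtain ⟨⟨pa, pt⟩, hp⟩ := p
  simp at h ⊢
  omega

/-- A pointed tree: exactly one vertex is marked as the point. -/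
def Pointed (T : PreTree α) : Prop := markCount T = 1

/-- Remove all point marks. -/
def unmark : PreTree α → PreTree α
  | node _ cs => node false (cs.attach.map fun p => (p.1.1, unmark p.1.2))
termination_by t => sizeOf t
decreasing_by
  have h := List.sizeOf_lt_of_mem p.2
  obtain ⟨⟨pa, pt⟩, hp⟩ := p
  simp at h ⊢
  omega

/-- Graft the tree `S` onto the point of `T` (identifying the point of `T`
with the root of `S`); the marks of `S` determine the new point. -/
def graft (S : PreTree α) : PreTree α → PreTree α
  | node b cs =>
      if b then node S.mark (cs ++ S.children)
      else node b (cs.attach.map fun p => (p.1.1, graft S p.1.2))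
termination_by t => sizeOf t
decreasing_by
  have h := List.sizeOf_lt_of_mem p.2
  obtain ⟨⟨pa, pt⟩, hp⟩ := p
  simp at h ⊢
  omega

/-- Move the point of `T` to its root. -/
def pointAtRoot (T : PreTree α) : PreTree α := node true (unmark T).children

/-- Pointed tree concatenation `T ∘ S`. -/
noncomputable def concat (T S : PreTree α) : PreTree α := reduce (graft S T)

/-- The domain operation `D(T)` on pointed trees. -/
noncomputable def domTree (T : PreTree α) : PreTree α := reduce (pointAtRoot T)

/-- The trivial pointed tree: one vertex, both root and point. -/
def trivialTree : PreTree α := node true []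

/-- The two-vertex pointed tree with a single `a`-labelled edge, point at the child. -/
def arrow (a : α) : PreTree α := node false [(a, node true [])]


/-- Set-theoretic equality of trees (children lists regarded as sets). -/
def eqv : PreTree α → PreTree α → Prop
  | node b₁ c₁, node b₂ c₂ =>
      b₁ = b₂ ∧
      (∀ p, p ∈ c₁ → ∃ q, q ∈ c₂ ∧ p.1 = q.1 ∧ eqv p.2 q.2) ∧
      (∀ q, q ∈ c₂ → ∃ p : {x // x ∈ c₁}, p.1.1 = q.1 ∧ eqv p.1.2 q.2)
termination_by t₁ _ => sizeOf t₁
decreasing_by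
  · have h₁ := List.sizeOf_lt_of_mem ‹p ∈ c₁›
    obtain ⟨pa, pt⟩ := p
    simp at h₁ ⊢
    omega
  · have h₁ := List.sizeOf_lt_of_mem p.2
    obtain ⟨⟨pa, pt⟩, hp⟩ := p
    simp at h₁ ⊢
    omega


/-- The subtree of `T` at position `p` (a list of child indices), if it exists. -/
def subAt : List ℕ → PreTree α → Option (PreTree α)
  | [], t => some t
  | i :: is, node _ cs => (cs[i]?).bind fun p => subAt is p.2

/-- `p` is a vertex of `T`. -/
def IsVertex (T : PreTree α) (p : List ℕ) : Prop := ∃ t, subAt p T = some t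

/-- The vertex `p` of `T` is the point (is marked). -/
def IsPoint (T : PreTree α) (p : List ℕ) : Prop :=
  ∃ t, subAt p T = some t ∧ t.mark = true

/-- There is an `a`-labelled edge of `T` from vertex `p` (the parent) to
vertex `q` (the child). -/
def Edge (T : PreTree α) (a : α) (p q : List ℕ) : Prop :=
  ∃ c, subAt p T = some c ∧ ∃ i t, c.children[i]? = some (a, t) ∧ q = p ++ [i]

theorem root_isVertex (T : PreTree α) : IsVertex T [] := ⟨T, rfl⟩

/-- A homomorphism of pointed labelled rooted trees from `S` to `T`:
a map of vertices preserving the labelled edge relations, sending the root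
to the root and points to points. -/
def HomTree (S T : PreTree α) : Prop :=
  ∃ θ : List ℕ → List ℕ,
    θ [] = [] ∧
    (∀ p, IsVertex S p → IsVertex T (θ p)) ∧
    (∀ a p q, Edge S a p q → Edge T a (θ p) (θ q)) ∧
    (∀ p, IsPoint S p → IsPoint T (θ p))

/-- A homomorphism of the pointed tree `T`, viewed as a relational structure,
into the relational structure `(X, f)`, mapping the root of `T` to `x` and
the point of `T` to `y`. -/
def HomInto {X : Type} (T : PreTree α) (f : α → X → X → Prop) (x y : X) : Prop :=
  ∃ θ : List ℕ → X,
    θ [] = x ∧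
    (∀ a p q, Edge T a p q → f a (θ p) (θ q)) ∧
    (∀ p, IsPoint T p → θ p = y)


end PreTree

namespace FreeKAD

/-- Terms of the signature `{∘, 1, D}`. -/
inductive Term1 (α : Type) : Type
  | var : α → Term1 α
  | one : Term1 α
  | comp : Term1 α → Term1 α → Term1 α
  | dom : Term1 α → Term1 α

/-- Terms of the signature `{∘, +, *, 0, 1, D}` (Kleene algebra with domain). -/
inductive TermK (α : Type) : Type
  | var : α → TermK α
  | zero : TermK α
  | one : TermK α
  | comp : TermK α → TermK α → TermK α
  | add : TermK α → TermK α → TermK α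
  | star : TermK α → TermK α
  | dom : TermK α → TermK α

variable {α : Type}

/-- The relational interpretation of a `{∘, 1, D}`-term over a set `X`,
under an assignment `f` of binary relations on `X` to the variables. -/
def rinterp1 {X : Type} (f : α → X → X → Prop) : Term1 α → X → X → Prop
  | .var a => f a
  | .one => fun x y => x = y
  | .comp s t => fun x y => ∃ z, rinterp1 f s x z ∧ rinterp1 f t z y
  | .dom s => fun x y => x = y ∧ ∃ z, rinterp1 f s x z

/-- The relational interpretation of a `{∘, +, *, 0, 1, D}`-term over a set `X`,
under an assignment `f` of binary relations on `X` to the variables. -/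
def rinterpK {X : Type} (f : α → X → X → Prop) : TermK α → X → X → Prop
  | .var a => f a
  | .zero => fun _ _ => False
  | .one => fun x y => x = y
  | .comp s t => fun x y => ∃ z, rinterpK f s x z ∧ rinterpK f t z y
  | .add s t => fun x y => rinterpK f s x y ∨ rinterpK f t x y
  | .star s => Relation.ReflTransGen (rinterpK f s)
  | .dom s => fun x y => x = y ∧ ∃ z, rinterpK f s x z

/-- Composition of binary relations. -/
def relComp {X : Type} (R S : X → X → Prop) : X → X → Prop :=
  fun x y => ∃ z, R x z ∧ S z y

/-- Union of binary relations. -/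
def relUnion {X : Type} (R S : X → X → Prop) : X → X → Prop :=
  fun x y => R x y ∨ S x y

/-- The domain operation on binary relations. -/
def relDom {X : Type} (R : X → X → Prop) : X → X → Prop :=
  fun x y => x = y ∧ ∃ z, R x z

/-- The identity relation. -/
def relId {X : Type} : X → X → Prop := fun x y => x = y

/-- The empty relation. -/
def relEmpty {X : Type} : X → X → Prop := fun _ _ => False

end FreeKAD

namespace FreeKAD

open PreTree

variable {α : Type}

/-- The single-tree interpretation of `{∘, 1, D}`-terms. -/
noncomputable def interp1 : Term1 α → PreTree α
  | .var a => arrow a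
  | .one => trivialTree
  | .comp s t => concat (interp1 s) (interp1 t)
  | .dom s => domTree (interp1 s)

/-- The set of `≤`-maximal elements of a set of trees. -/
def maximalSet (K : Set (PreTree α)) : Set (PreTree α) :=
  {T | T ∈ K ∧ ∀ S ∈ K, le T S → le S T}

/-- Elementwise lifting of pointed tree concatenation to sets of trees. -/
def liftComp (K L : Set (PreTree α)) : Set (PreTree α) :=
  {U | ∃ T ∈ K, ∃ S ∈ L, U = concat T S}

/-- Elementwise lifting of the domain operation to sets of trees. -/
def liftDom (K : Set (PreTree α)) : Set (PreTree α) :=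
  {U | ∃ T ∈ K, U = domTree T}

/-- Iterated lifted concatenation: `K^0 = {trivial}`, `K^(i+1) = K^i ∘ K`. -/
def powC (K : Set (PreTree α)) : ℕ → Set (PreTree α)
  | 0 => {trivialTree}
  | i + 1 => liftComp (powC K i) K

/-- The standard tree interpretation of `{∘, +, *, 0, 1, D}`-terms. -/
def sinterp : TermK α → Set (PreTree α)
  | .var a => {arrow a}
  | .zero => ∅
  | .one => {trivialTree}
  | .comp s t => maximalSet (liftComp (sinterp s) (sinterp t))
  | .add s t => maximalSet (sinterp s ∪ sinterp t)
  | .star s => maximalSet (⋃ i : ℕ, powC (sinterp s) (i + 1))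
  | .dom s => maximalSet (liftDom (sinterp s))

/-- Equality of sets of trees, with trees compared as (hereditarily finite) sets. -/
def SetEqv (K L : Set (PreTree α)) : Prop :=
  (∀ T ∈ K, ∃ S ∈ L, eqv T S) ∧ (∀ S ∈ L, ∃ T ∈ K, eqv T S)

/-- A set of reduced pointed trees is regular if it is the standard tree
interpretation of some `{∘, +, *, 0, 1, D}`-term. -/
def Regular (L : Set (PreTree α)) : Prop := ∃ t : TermK α, L = sinterp t

/-- The set of reduced trees lying `≤`-below some member of `L`. -/
def down (L : Set (PreTree α)) : Set (PreTree α) :=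
  {T | Reduced T ∧ ∃ S ∈ L, le T S}

end FreeKAD

/-! A pointed tree `T` denotes, in a relational structure `(X, f)`, the relation `treeRel f T` of
pairs `(x, y)` such that some homomorphism of `T` into `(X, f)` sends the root to `x` and the point
to `y`. By induction on `s`, `rinterp1 f s = treeRel f (interp1 s)`: reduction does not change the
relation, because every dropped branch is the homomorphic image of a kept one; grafting `S` onto
the unique point of `T` composes the relations; moving the point to the root gives the domain.
Finally, trees that are equal as sets (`eqv`) denote the same relation. -/

theorem List.eq_of_sum_map_le_one {β : Type*} {l : List β} {g : β → ℕ}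
    (hl : (l.map g).sum ≤ 1) {p q : β} (hp : p ∈ l) (hq : q ∈ l) (hp0 : g p ≠ 0)
    (hq0 : g q ≠ 0) : p = q := by
  classical
  by_contra hne
  have hsplit := List.sum_map_erase g hp
  have hqle := List.le_sum_of_mem (List.mem_map_of_mem (f := g) (List.mem_erase_of_ne
    (Ne.symm hne) |>.2 hq))
  omega

namespace PreTree

variable {α : Type}

theorem sizeOf_lt_of_mem {b : Bool} {cs : List (α × PreTree α)} {p : α × PreTree α}
    (h : p ∈ cs) : sizeOf p.2 < sizeOf (node b cs) := by
  have h := List.sizeOf_lt_of_mem h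
  obtain ⟨pa, pt⟩ := p
  simp only [node.sizeOf_spec, Prod.mk.sizeOf_spec] at h ⊢
  omega

@[elab_as_elim]
theorem induction_mem {motive : PreTree α → Prop}
    (node : ∀ b cs, (∀ p ∈ cs, motive p.2) → motive (node b cs)) : ∀ T, motive T
  | .node b cs => node b cs fun p _ => induction_mem node p.2
termination_by T => sizeOf T
decreasing_by exact sizeOf_lt_of_mem ‹_›

theorem markCount_node (b : Bool) (cs : List (α × PreTree α)) :
    markCount (node b cs) = cond b 1 0 + (cs.map fun p => markCount p.2).sum := by
  rw [markCount]; simp only [List.map_attach_eq_pmap, List.pmap_eq_map]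

theorem unmark_node (b : Bool) (cs : List (α × PreTree α)) :
    unmark (node b cs) = node false (cs.map fun p => (p.1, unmark p.2)) := by
  rw [unmark]; simp only [List.map_attach_eq_pmap, List.pmap_eq_map]

theorem graft_node (S : PreTree α) (b : Bool) (cs : List (α × PreTree α)) :
    graft S (node b cs) = if b then node S.mark (cs ++ S.children)
      else node b (cs.map fun p => (p.1, graft S p.2)) := by
  rw [graft]; simp only [List.map_attach_eq_pmap, List.pmap_eq_map]

open scoped Classical in
theorem reduce_node (b : Bool) (cs : List (α × PreTree α)) :
    reduce (node b cs) =
      let cs' := cs.map fun p => (p.1, reduce p.2)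
      node b (cs'.filter fun q => ∀ q' ∈ cs', q'.1 = q.1 → le q'.2 q.2 → le q.2 q'.2) := by
  rw [reduce]; simp only [List.map_attach_eq_pmap, List.pmap_eq_map]

theorem le_node {b₁ b₂ : Bool} {c₁ c₂ : List (α × PreTree α)} :
    le (node b₁ c₁) (node b₂ c₂) ↔
      (b₂ = true → b₁ = true) ∧
      ∀ q ∈ c₂, ∃ p ∈ c₁, p.1 = q.1 ∧ le p.2 q.2 := by
  rw [le]

theorem eqv_node {b₁ b₂ : Bool} {c₁ c₂ : List (α × PreTree α)} :
    eqv (node b₁ c₁) (node b₂ c₂) ↔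
      b₁ = b₂ ∧ (∀ p ∈ c₁, ∃ q ∈ c₂, p.1 = q.1 ∧ eqv p.2 q.2) ∧
      ∀ q ∈ c₂, ∃ p : {x // x ∈ c₁}, p.1.1 = q.1 ∧ eqv p.1.2 q.2 := by
  rw [eqv]

/-- `A ≤ B` means that `B` maps homomorphically into `A`. -/
instance : Preorder (PreTree α) where
  le := le
  le_refl T := by
    induction T using induction_mem with
    | node b cs ih => exact le_node.2 ⟨id, fun q hq => ⟨q, hq, rfl, ih q hq⟩⟩
  le_trans A B C hAB hBC := by
    induction C using induction_mem generalizing A B with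
    | node b₃ c₃ ih =>
      obtain ⟨b₁, c₁⟩ := A
      obtain ⟨b₂, c₂⟩ := B
      obtain ⟨hb₁₂, hc₁₂⟩ := le_node.1 hAB
      obtain ⟨hb₂₃, hc₂₃⟩ := le_node.1 hBC
      refine le_node.2 ⟨hb₁₂ ∘ hb₂₃, fun r hr => ?_⟩
      obtain ⟨q, hq, hqr, hle₂⟩ := hc₂₃ r hr
      obtain ⟨p, hp, hpq, hle₁⟩ := hc₁₂ q hq
      exact ⟨p, hp, hpq.trans hqr, ih r hr _ _ hle₁ hle₂⟩

theorem markCount_node_eq_zero {b : Bool} {cs : List (α × PreTree α)} :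
    markCount (node b cs) = 0 ↔ b = false ∧ ∀ p ∈ cs, markCount p.2 = 0 := by
  rw [markCount_node, Nat.add_eq_zero_iff, List.sum_eq_zero_iff, List.forall_mem_map]
  cases b <;> simp

theorem exists_mem_markCount_ne_zero {cs : List (α × PreTree α)}
    (h : markCount (node false cs) ≠ 0) : ∃ q ∈ cs, markCount q.2 ≠ 0 := by
  by_contra! hcs
  exact h (markCount_node_eq_zero.2 ⟨rfl, hcs⟩)

theorem markCount_le_of_mem {b : Bool} {cs : List (α × PreTree α)} {p : α × PreTree α}
    (hp : p ∈ cs) : markCount p.2 ≤ markCount (node b cs) := by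
  rw [markCount_node]
  exact le_add_left (List.le_sum_of_mem (List.mem_map_of_mem hp))

theorem eq_of_markCount_ne_zero {b : Bool} {cs : List (α × PreTree α)}
    (hT : markCount (node b cs) ≤ 1) {p q : α × PreTree α} (hp : p ∈ cs) (hq : q ∈ cs)
    (hp0 : markCount p.2 ≠ 0) (hq0 : markCount q.2 ≠ 0) : p = q := by
  rw [markCount_node] at hT
  exact List.eq_of_sum_map_le_one (g := fun p => markCount p.2) (by omega) hp hq hp0 hq0

theorem markCount_eq_zero_of_mem_of_root {cs : List (α × PreTree α)}
    (hT : markCount (node true cs) ≤ 1) {p : α × PreTree α} (hp : p ∈ cs) :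
    markCount p.2 = 0 := by
  have := List.le_sum_of_mem (List.mem_map_of_mem (f := fun p => markCount p.2) hp)
  rw [markCount_node, cond_true] at hT
  omega

theorem markCount_eq_zero_of_le {A B : PreTree α} (hle : A ≤ B) (hA : markCount A = 0) :
    markCount B = 0 := by
  induction B using induction_mem generalizing A with
  | node b₂ c₂ ih =>
    obtain ⟨b₁, c₁⟩ := A
    obtain ⟨hb, hc⟩ := le_node.1 hle
    obtain ⟨hb₁, hc₁⟩ := markCount_node_eq_zero.1 hA
    refine markCount_node_eq_zero.2 ⟨?_, fun q hq => ?_⟩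
    · cases b₂ <;> simp_all
    · obtain ⟨p, hp, -, hpq⟩ := hc q hq
      exact ih q hq hpq (hc₁ p hp)

theorem markCount_unmark (T : PreTree α) : markCount (unmark T) = 0 := by
  induction T using induction_mem with
  | node b cs ih =>
    rw [unmark_node, markCount_node_eq_zero]
    exact ⟨rfl, List.forall_mem_map.2 ih⟩

theorem markCount_pointAtRoot (T : PreTree α) : markCount (pointAtRoot T) = 1 := by
  obtain ⟨b, cs⟩ := T
  have h := markCount_unmark (node b cs)
  rw [unmark_node, markCount_node] at h
  rw [pointAtRoot, unmark_node, children, markCount_node]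
  simpa using h

theorem graft_of_markCount_eq_zero (S : PreTree α) {T : PreTree α} (hT : markCount T = 0) :
    graft S T = T := by
  induction T using induction_mem with
  | node b cs ih =>
    obtain ⟨rfl, hcs⟩ := markCount_node_eq_zero.1 hT
    rw [graft_node, if_neg Bool.false_ne_true]
    congr 1
    conv_rhs => rw [← List.map_id cs]
    exact List.map_congr_left fun p hp => by rw [ih p hp (hcs p hp)]; rfl

theorem markCount_graft (S : PreTree α) {T : PreTree α} (hT : markCount T ≤ 1) :
    markCount (graft S T) = markCount T * markCount S := by
  induction T using induction_mem with
  | node b cs ih =>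
    cases b
    · rw [graft_node, if_neg Bool.false_ne_true, markCount_node, markCount_node, List.map_map]
      simp only [cond_false, zero_add]
      rw [← List.sum_map_mul_right]
      exact congrArg _ <| List.map_congr_left fun p hp =>
        ih p hp ((markCount_le_of_mem hp).trans hT)
    · obtain ⟨bS, cS⟩ := S
      have hcs : (cs.map fun p => markCount p.2).sum = 0 :=
        List.sum_eq_zero_iff.2 <| List.forall_mem_map.2 fun p hp =>
          markCount_eq_zero_of_mem_of_root hT hp
      simp [graft_node, markCount_node, hcs, mark, children]

open scoped Classical in
theorem markCount_reduce {T : PreTree α} (hT : markCount T ≤ 1) :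
    markCount (reduce T) = markCount T := by
  induction T using induction_mem with
  | node b cs ih =>
    rw [reduce_node]
    set cs' := cs.map fun p => (p.1, reduce p.2)
    set IsKept : α × PreTree α → Prop :=
      fun q => ∀ q' ∈ cs', q'.1 = q.1 → le q'.2 q.2 → le q.2 q'.2
    have hsum : (cs'.map fun p => markCount p.2).sum = (cs.map fun p => markCount p.2).sum := by
      rw [List.map_map]
      exact congrArg _ (List.map_congr_left fun p hp =>
        ih p hp ((markCount_le_of_mem hp).trans hT))
    have hT' : markCount (node b cs') ≤ 1 := by rwa [markCount_node, hsum, ← markCount_node]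
    -- a dropped child lies strictly below another one, so it cannot carry the unique point
    have hdropped : ∀ r ∈ cs'.filter (fun q => ¬ IsKept q), markCount r.2 = 0 := by
      intro r hr
      obtain ⟨hr, hdom⟩ := List.mem_filter.1 hr
      obtain ⟨q', hq', -, hle, hnle⟩ :
          ∃ q' ∈ cs', q'.1 = r.1 ∧ le q'.2 r.2 ∧ ¬ le r.2 q'.2 := by
        simpa [IsKept] using hdom
      by_contra hr0
      have hq'0 : markCount q'.2 ≠ 0 := fun h => hr0 (markCount_eq_zero_of_le hle h)
      exact hnle (eq_of_markCount_ne_zero hT' hr hq' hr0 hq'0 ▸ le_refl r.2)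
    have hkept : ((cs'.filter IsKept).map fun p => markCount p.2).sum =
        (cs'.map fun p => markCount p.2).sum := by
      rw [← List.sum_map_filter_add_sum_map_filter_not IsKept _ cs',
        List.sum_eq_zero_iff.2 (List.forall_mem_map.2 hdropped), add_zero]
    rw [markCount_node, markCount_node, hkept, hsum]

section Relational

open FreeKAD (relComp relDom)

variable {X : Type}

/-- `treeRel f T x y` holds iff some homomorphism of `T` into `(X, f)` maps the root to `x` and
every point to `y`; for a pointed tree this is the relation that `T` denotes in `(X, f)`. -/
def treeRel (f : α → X → X → Prop) : PreTree α → X → X → Prop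
  | node b cs => fun x y =>
      (b = true → x = y) ∧ ∀ p ∈ cs, ∃ z, f p.1 x z ∧ treeRel f p.2 z y
termination_by T => sizeOf T
decreasing_by exact sizeOf_lt_of_mem ‹_›

variable {f : α → X → X → Prop}

theorem treeRel_node {b : Bool} {cs : List (α × PreTree α)} {x y : X} :
    treeRel f (node b cs) x y ↔
      (b = true → x = y) ∧ ∀ p ∈ cs, ∃ z, f p.1 x z ∧ treeRel f p.2 z y := by
  rw [treeRel]

theorem treeRel_of_le {A B : PreTree α} (hle : A ≤ B) {x y : X} (h : treeRel f A x y) :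
    treeRel f B x y := by
  induction B using induction_mem generalizing A x with
  | node b₂ c₂ ih =>
    obtain ⟨b₁, c₁⟩ := A
    obtain ⟨hb, hc⟩ := le_node.1 hle
    obtain ⟨hroot, hchildren⟩ := treeRel_node.1 h
    refine treeRel_node.2 ⟨hroot ∘ hb, fun q hq => ?_⟩
    obtain ⟨p, hp, hpq, hle'⟩ := hc q hq
    obtain ⟨z, hz, hzy⟩ := hchildren p hp
    exact ⟨z, hpq ▸ hz, ih q hq hle' hzy⟩

theorem treeRel_eq_of_eqv {T S : PreTree α} (h : eqv T S) : treeRel f T = treeRel f S := by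
  induction T using induction_mem generalizing S with
  | node b₁ c₁ ih =>
    obtain ⟨b₂, c₂⟩ := S
    obtain ⟨rfl, hfwd, hbwd⟩ := eqv_node.1 h
    funext x y
    rw [treeRel_node, treeRel_node]
    refine propext (and_congr_right fun _ => ⟨fun h₁ q hq => ?_, fun h₂ p hp => ?_⟩)
    · obtain ⟨⟨p, hp⟩, hpq, hpq'⟩ := hbwd q hq
      obtain ⟨z, hz, hzy⟩ := h₁ p hp
      exact ⟨z, hpq ▸ hz, ih p hp hpq' ▸ hzy⟩
    · obtain ⟨q, hq, hpq, hpq'⟩ := hfwd p hp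
      obtain ⟨z, hz, hzy⟩ := h₂ q hq
      exact ⟨z, hpq ▸ hz, ih p hp hpq' ▸ hzy⟩

open scoped Classical in
theorem treeRel_reduce (T : PreTree α) : treeRel f (reduce T) = treeRel f T := by
  induction T using induction_mem with
  | node b cs ih =>
    funext x y
    rw [reduce_node]
    dsimp only
    set cs' := cs.map fun p => (p.1, reduce p.2)
    rw [treeRel_node, treeRel_node]
    refine propext (and_congr_right fun _ => ⟨fun h p hp => ?_, fun h q hq => ?_⟩)
    · -- the child `p` is dominated by a kept child `m` with the same label
      have hfin : {t | (p.1, t) ∈ cs'}.Finite :=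
        (cs'.map Prod.snd).finite_toSet.subset fun t ht => List.mem_map.2 ⟨_, ht, rfl⟩
      obtain ⟨m, hmp, hm, hmin⟩ := hfin.isPWO.exists_le_minimal (a := reduce p.2)
        (List.mem_map_of_mem (f := fun p : α × PreTree α => (p.1, reduce p.2)) hp)
      have hkept : (p.1, m) ∈ cs'.filter fun q =>
          ∀ q' ∈ cs', q'.1 = q.1 → le q'.2 q.2 → le q.2 q'.2 := by
        refine List.mem_filter.2 ⟨hm, decide_eq_true fun q' hq' hlabel hle => ?_⟩
        obtain ⟨a, t⟩ := q'
        exact hmin (show (p.1, t) ∈ cs' from hlabel ▸ hq') hle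
      obtain ⟨z, hz, hzy⟩ := h _ hkept
      exact ⟨z, hz, ih p hp ▸ treeRel_of_le hmp hzy⟩
    · obtain ⟨p, hp, rfl⟩ := List.mem_map.1 (List.mem_filter.1 hq).1
      obtain ⟨z, hz, hzy⟩ := h p hp
      exact ⟨z, hz, (ih p hp).symm ▸ hzy⟩

theorem treeRel_of_markCount_eq_zero {T : PreTree α} (hT : markCount T = 0) {x y : X}
    (h : treeRel f T x y) (y' : X) : treeRel f T x y' := by
  induction T using induction_mem generalizing x with
  | node b cs ih =>
    obtain ⟨rfl, hcs⟩ := markCount_node_eq_zero.1 hT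
    refine treeRel_node.2 ⟨nofun, fun p hp => ?_⟩
    obtain ⟨z, hz, hzy⟩ := (treeRel_node.1 h).2 p hp
    exact ⟨z, hz, ih p hp (hcs p hp) hzy⟩

theorem treeRel_graft_node_true (S : PreTree α) {cs : List (α × PreTree α)}
    (hT : markCount (node true cs) ≤ 1) :
    treeRel f (graft S (node true cs)) = relComp (treeRel f (node true cs)) (treeRel f S) := by
  have hcs := fun p (hp : p ∈ cs) => markCount_eq_zero_of_mem_of_root hT hp
  obtain ⟨bS, cS⟩ := S
  funext x y
  simp only [graft_node, if_true, mark, children, relComp, treeRel_node,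
    List.forall_mem_append, forall_const]
  refine propext ⟨?_, ?_⟩
  · rintro ⟨hroot, hcsy, hcS⟩
    refine ⟨x, ⟨rfl, fun p hp => ?_⟩, hroot, hcS⟩
    obtain ⟨z, hz, hzy⟩ := hcsy p hp
    exact ⟨z, hz, treeRel_of_markCount_eq_zero (hcs p hp) hzy x⟩
  · rintro ⟨_, ⟨rfl, hcsx⟩, hroot, hcS⟩
    refine ⟨hroot, fun p hp => ?_, hcS⟩
    obtain ⟨z, hz, hzx⟩ := hcsx p hp
    exact ⟨z, hz, treeRel_of_markCount_eq_zero (hcs p hp) hzx y⟩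

theorem treeRel_graft (S : PreTree α) {T : PreTree α} (hT : Pointed T) :
    treeRel f (graft S T) = relComp (treeRel f T) (treeRel f S) := by
  induction T using induction_mem with
  | node b cs ih =>
    unfold Pointed at hT
    cases b
    case true => exact treeRel_graft_node_true S hT.le
    -- `S` is grafted inside the unique pointed child `q`; the other children are left unchanged
    obtain ⟨q, hq, hq0⟩ := exists_mem_markCount_ne_zero (cs := cs) (by omega)
    have hq1 : markCount q.2 = 1 := by have := markCount_le_of_mem (b := false) hq; omega
    have hothers : ∀ p ∈ cs, p ≠ q → markCount p.2 = 0 := fun p hp hpq => by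
      by_contra hp0
      exact hpq (eq_of_markCount_ne_zero hT.le hp hq hp0 hq0)
    funext x y
    rw [graft_node, if_neg Bool.false_ne_true]
    refine propext ⟨fun h => ?_, fun ⟨w, hxw, hwy⟩ => ?_⟩
    · obtain ⟨z, hz, hzy⟩ := (treeRel_node.1 h).2 _ (List.mem_map_of_mem hq)
      rw [ih q hq hq1] at hzy
      obtain ⟨w, hzw, hwy⟩ := hzy
      refine ⟨w, treeRel_node.2 ⟨nofun, fun p hp => ?_⟩, hwy⟩
      by_cases hpq : p = q
      · exact hpq ▸ ⟨z, hz, hzw⟩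
      · obtain ⟨z', hz', hz'y⟩ := (treeRel_node.1 h).2 _ (List.mem_map_of_mem hp)
        rw [graft_of_markCount_eq_zero S (hothers p hp hpq)] at hz'y
        exact ⟨z', hz', treeRel_of_markCount_eq_zero (hothers p hp hpq) hz'y w⟩
    · refine treeRel_node.2 ⟨nofun, List.forall_mem_map.2 fun p hp => ?_⟩
      obtain ⟨z, hz, hzw⟩ := (treeRel_node.1 hxw).2 p hp
      refine ⟨z, hz, ?_⟩
      by_cases hpq : p = q
      · subst hpq
        rw [ih p hp hq1]
        exact ⟨w, hzw, hwy⟩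
      · rw [graft_of_markCount_eq_zero S (hothers p hp hpq)]
        exact treeRel_of_markCount_eq_zero (hothers p hp hpq) hzw y

theorem exists_treeRel_node_iff {b : Bool} {cs : List (α × PreTree α)}
    (hT : markCount (node b cs) ≤ 1) {x : X} :
    (∃ y, treeRel f (node b cs) x y) ↔
      ∀ p ∈ cs, ∃ z, f p.1 x z ∧ ∃ y, treeRel f p.2 z y := by
  refine ⟨fun ⟨y, h⟩ p hp => ?_, fun h => ?_⟩
  · obtain ⟨z, hz, hzy⟩ := (treeRel_node.1 h).2 p hp
    exact ⟨z, hz, y, hzy⟩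
  by_cases hfree : ∀ p ∈ cs, markCount p.2 = 0
  · refine ⟨x, treeRel_node.2 ⟨fun _ => rfl, fun p hp => ?_⟩⟩
    obtain ⟨z, hz, y, hzy⟩ := h p hp
    exact ⟨z, hz, treeRel_of_markCount_eq_zero (hfree p hp) hzy x⟩
  -- the unique pointed child `q` determines where the point goes
  push Not at hfree
  obtain ⟨q, hq, hq0⟩ := hfree
  obtain ⟨zq, hzq, y, hy⟩ := h q hq
  have hb : b = false := by
    cases b
    · rfl
    · exact absurd (markCount_eq_zero_of_mem_of_root hT hq) hq0
  refine ⟨y, treeRel_node.2 ⟨by simp [hb], fun p hp => ?_⟩⟩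
  by_cases hpq : p = q
  · exact hpq ▸ ⟨zq, hzq, hy⟩
  · have hp0 : markCount p.2 = 0 := by
      by_contra hp0
      exact hpq (eq_of_markCount_ne_zero hT hp hq hp0 hq0)
    obtain ⟨z, hz, y', hzy'⟩ := h p hp
    exact ⟨z, hz, treeRel_of_markCount_eq_zero hp0 hzy' y⟩

theorem treeRel_unmark {T : PreTree α} (hT : markCount T ≤ 1) {x y : X} :
    treeRel f (unmark T) x y ↔ ∃ z, treeRel f T x z := by
  induction T using induction_mem generalizing x with
  | node b cs ih =>
    rw [unmark_node, treeRel_node, exists_treeRel_node_iff hT, List.forall_mem_map]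
    refine (and_iff_right nofun).trans (forall₂_congr fun p hp => exists_congr fun z =>
      and_congr_right fun _ => ih p hp ((markCount_le_of_mem hp).trans hT))

theorem treeRel_pointAtRoot {T : PreTree α} (hT : markCount T ≤ 1) :
    treeRel f (pointAtRoot T) = relDom (treeRel f T) := by
  funext x y
  obtain ⟨b, cs⟩ := T
  have hunmark := treeRel_unmark (f := f) hT (x := x) (y := x)
  rw [unmark_node, treeRel_node, and_iff_right nofun] at hunmark
  rw [pointAtRoot, unmark_node, children, treeRel_node, relDom, ← hunmark]
  refine propext ⟨fun ⟨hxy, h⟩ => ?_, fun ⟨hxy, h⟩ => ?_⟩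
  · obtain rfl := hxy rfl
    exact ⟨rfl, h⟩
  · subst hxy
    exact ⟨fun _ => rfl, h⟩

end Relational

end PreTree

namespace FreeKAD

open PreTree

variable {α : Type}

theorem pointed_interp1 (s : Term1 α) : Pointed (interp1 s) := by
  induction s with
  | var a => simp [interp1, arrow, PreTree.Pointed, markCount_node]
  | one => simp [interp1, trivialTree, PreTree.Pointed, markCount_node]
  | comp s t hs ht =>
    have hgraft : markCount (graft (interp1 t) (interp1 s)) = 1 := by
      rw [markCount_graft _ (le_of_eq hs), hs, ht, one_mul]
    exact (markCount_reduce (le_of_eq hgraft)).trans hgraft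
  | dom s _ =>
    exact (markCount_reduce (markCount_pointAtRoot _).le).trans (markCount_pointAtRoot _)

theorem rinterp1_eq_treeRel {X : Type} (f : α → X → X → Prop) (s : Term1 α) :
    rinterp1 f s = treeRel f (interp1 s) := by
  induction s with
  | var a =>
    funext x y
    simp [rinterp1, interp1, arrow, treeRel_node]
  | one =>
    funext x y
    simp [rinterp1, interp1, trivialTree, treeRel_node]
  | comp s t hs ht =>
    change relComp (rinterp1 f s) (rinterp1 f t) = treeRel f (concat (interp1 s) (interp1 t))
    rw [concat, treeRel_reduce, treeRel_graft _ (pointed_interp1 s), hs, ht]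
  | dom s hs =>
    change relDom (rinterp1 f s) = treeRel f (domTree (interp1 s))
    rw [domTree, treeRel_reduce, treeRel_pointAtRoot (le_of_eq (pointed_interp1 s)), hs]

/-- Soundness with respect to relations for the signature
`{∘, 1, D}`: if `⟨s⟩ = ⟨t⟩` (equality of trees, whose children collections
are sets, is `eqv`), then for every set `X` and every assignment `f` of
binary relations on `X` to the variables, the relational interpretations of
`s` and `t` under `f` coincide. -/
theorem soundness_comp_one_dom {α : Type} (s t : Term1 α)
    (h : eqv (interp1 s) (interp1 t)) :
    ∀ (X : Type) (f : α → X → X → Prop), rinterp1 f s = rinterp1 f t := by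
  intro X f
  rw [rinterp1_eq_treeRel, rinterp1_eq_treeRel, treeRel_eq_of_eqv h]

end FreeKAD
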